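/- Let {x_i}_{i=1}^m be nonzero vectors in ℝ^n. The following are equivalent: (1) {x_i}_{i=1}^m does weak phase retrieval in ℝ^n; (2) whenever x, y ∈ ℝ^n satisfy |⟨x, x_i⟩| = |⟨y, x_i⟩| for all i = 1,…,m, there is a scalar a ≠ 0 such that for every coordinate i ∈ {1,…,n} one of the following holds: (a) x(i) ≠ 0 and y(i) = 0; (b) x(i) = 0 and y(i) ≠ 0; (c) x(i) = 0 = y(i); (d) x(i) = a·y(i); (e) x(i) = (1/a)·y(i). -/

import Mathlib

open scoped RealInnerProductSpace BigOperators

/-- The sign function: `sgn t = 1` if `t > 0` and `-1` otherwise (the paper only uses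
it on nonzero reals). -/
noncomputable def sgn (t : ℝ) : ℝ := if 0 < t then 1 else -1

/-- Two vectors in `ℝ^n` weakly have the same phase: there is `θ ∈ {1,-1}` with
`sgn (x i) = θ * sgn (y i)` for every coordinate `i` where both entries are nonzero. -/
def WeaklySamePhase {n : ℕ} (x y : EuclideanSpace ℝ (Fin n)) : Prop :=
  ∃ θ : ℝ, (θ = 1 ∨ θ = -1) ∧
    ∀ i : Fin n, x i ≠ 0 → y i ≠ 0 → sgn (x i) = θ * sgn (y i)

/-- A family of vectors does weak phase retrieval in `ℝ^n`. -/
def DoesWeakPhaseRetrieval {n : ℕ} {ι : Type*} (x : ι → EuclideanSpace ℝ (Fin n)) : Prop :=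
  ∀ u v : EuclideanSpace ℝ (Fin n),
    (∀ i, |(⟪u, x i⟫)| = |(⟪v, x i⟫)|) → WeaklySamePhase u v

/-- A family of vectors does phase retrieval in `ℝ^n`. -/
def DoesPhaseRetrieval {n : ℕ} {ι : Type*} (x : ι → EuclideanSpace ℝ (Fin n)) : Prop :=
  ∀ u v : EuclideanSpace ℝ (Fin n),
    (∀ i, |(⟪u, x i⟫)| = |(⟪v, x i⟫)|) → u = v ∨ u = -v



lemma sgn_vals (t : ℝ) : sgn t = 1 ∨ sgn t = -1 := by
  unfold sgn; split <;> simp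

lemma sgn_mul_self (t : ℝ) : sgn t * sgn t = 1 := by
  rcases sgn_vals t with h | h <;> rw [h] <;> norm_num

lemma sgn_mul (a b : ℝ) (ha : a ≠ 0) (hb : b ≠ 0) : sgn (a * b) = sgn a * sgn b := by
  rcases ha.lt_or_gt with h1 | h1 <;> rcases hb.lt_or_gt with h2 | h2 <;>
    unfold sgn <;>
    [ rw [if_pos (mul_pos_of_neg_of_neg h1 h2), if_neg (not_lt.2 h1.le), if_neg (not_lt.2 h2.le)];
      rw [if_neg (not_lt.2 (mul_nonpos_of_nonpos_of_nonneg h1.le h2.le)), if_neg (not_lt.2 h1.le), if_pos h2];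
      rw [if_neg (not_lt.2 (mul_nonpos_of_nonneg_of_nonpos h1.le h2.le)), if_pos h1, if_neg (not_lt.2 h2.le)];
      rw [if_pos (mul_pos h1 h2), if_pos h1, if_pos h2]] <;> norm_num

lemma sgn_one_div (a : ℝ) : sgn (1 / a) = sgn a := by
  unfold sgn
  rw [one_div]
  simp only [inv_pos]

lemma sgn_pos_iff {x y : ℝ} (h : sgn x = sgn y) : 0 < x ↔ 0 < y := by
  unfold sgn at h
  constructor
  · intro h1; by_contra h2; rw [if_pos h1, if_neg h2] at h; norm_num at h
  · intro h1; by_contra h2; rw [if_neg h2, if_pos h1] at h; norm_num at h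

lemma keyAux (A B A' B' : ℝ) (hA : 0 ≤ A) (hB : 0 ≤ B) (hA' : 0 ≤ A') (hB' : 0 ≤ B')
    (h : ∀ t : ℝ, 0 ≤ t → A - t * B ≠ 0 → A' - t * B' ≠ 0 →
      (0 < A - t * B ↔ 0 < A' - t * B')) :
    ¬ A * B' < A' * B := by
  intro hlt
  have h1 : 0 < A' * B := lt_of_le_of_lt (mul_nonneg hA hB') hlt
  have hpos : 0 < A' ∧ 0 < B := by
    rcases mul_pos_iff.mp h1 with h2 | h2
    · exact h2
    · exact absurd h2.1 (not_lt.2 hA')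
  obtain ⟨hA'pos, hBpos⟩ := hpos
  rcases eq_or_lt_of_le hB' with hB'0 | hB'pos
  · -- B' = 0
    have ht : (0:ℝ) ≤ A / B + 1 := by positivity
    have hF : A - (A / B + 1) * B = -B := by field_simp; ring
    have hF' : A' - (A / B + 1) * B' = A' := by rw [← hB'0]; ring
    have := h (A / B + 1) ht (by rw [hF]; exact neg_ne_zero.mpr hBpos.ne')
      (by rw [hF']; exact hA'pos.ne')
    rw [hF, hF'] at this
    have : 0 < -B := this.mpr hA'pos
    linarith
  · have hd : A / B < A' / B' := (div_lt_div_iff₀ hBpos hB'pos).mpr hlt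
    set t := (A / B + A' / B') / 2 with htdef
    have ht1 : A / B < t := by rw [htdef]; linarith
    have ht2 : t < A' / B' := by rw [htdef]; linarith
    have ht : 0 ≤ t := le_trans (div_nonneg hA hBpos.le) ht1.le
    have hF : A - t * B < 0 := by
      have := (div_lt_iff₀ hBpos).mp ht1
      linarith
    have hF' : 0 < A' - t * B' := by
      have := (lt_div_iff₀ hB'pos).mp ht2
      linarith
    have := (h t ht hF.ne hF'.ne').mpr hF'
    linarith

lemma keyEq (A B A' B' : ℝ) (hA : 0 ≤ A) (hB : 0 ≤ B) (hA' : 0 ≤ A') (hB' : 0 ≤ B')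
    (h : ∀ t : ℝ, 0 ≤ t → A - t * B ≠ 0 → A' - t * B' ≠ 0 →
      (0 < A - t * B ↔ 0 < A' - t * B')) :
    A * B' = A' * B :=
  le_antisymm
    (not_lt.mp (keyAux A' B' A B hA' hB' hA hB (fun t ht h1 h2 => (h t ht h2 h1).symm)))
    (not_lt.mp (keyAux A B A' B' hA hB hA' hB' h))

lemma pair_ratio {n m : ℕ} (x : Fin m → EuclideanSpace ℝ (Fin n))
    (hWPR : DoesWeakPhaseRetrieval x)
    (u v : EuclideanSpace ℝ (Fin n)) (hmeas : ∀ k, |⟪u, x k⟫| = |⟪v, x k⟫|)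
    (i j : Fin n) (hui : u i ≠ 0) (hvi : v i ≠ 0) (huj : u j ≠ 0) (hvj : v j ≠ 0) :
    u i * v j = u j * v i ∨ u i * u j = v i * v j := by
  have hsign : ∀ s : ℝ,
      ((1+s) * u i + (1-s) * v i) * ((1-s) * u i + (1+s) * v i) ≠ 0 →
      ((1+s) * u j + (1-s) * v j) * ((1-s) * u j + (1+s) * v j) ≠ 0 →
      (0 < ((1+s) * u i + (1-s) * v i) * ((1-s) * u i + (1+s) * v i) ↔
       0 < ((1+s) * u j + (1-s) * v j) * ((1-s) * u j + (1+s) * v j)) := by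
    intro s hi0 hj0
    set P : EuclideanSpace ℝ (Fin n) := (1+s) • u + (1-s) • v with hP
    set Q : EuclideanSpace ℝ (Fin n) := (1-s) • u + (1+s) • v with hQ
    have hPk : ∀ k, P k = (1+s) * u k + (1-s) * v k := by
      intro k; rw [hP]; simp [smul_eq_mul]
    have hQk : ∀ k, Q k = (1-s) * u k + (1+s) * v k := by
      intro k; rw [hQ]; simp [smul_eq_mul]
    have hm : ∀ k, |⟪P, x k⟫| = |⟪Q, x k⟫| := by
      intro k
      have hP' : ⟪P, x k⟫ = (1+s) * ⟪u, x k⟫ + (1-s) * ⟪v, x k⟫ := by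
        rw [hP, inner_add_left, real_inner_smul_left, real_inner_smul_left]
      have hQ' : ⟪Q, x k⟫ = (1-s) * ⟪u, x k⟫ + (1+s) * ⟪v, x k⟫ := by
        rw [hQ, inner_add_left, real_inner_smul_left, real_inner_smul_left]
      rcases abs_eq_abs.mp (hmeas k) with hc | hc
      · rw [hP', hQ', hc]; congr 1; ring
      · rw [hP', hQ', hc,
          show (1+s) * (-⟪v, x k⟫) + (1-s) * ⟪v, x k⟫
            = -((1-s) * (-⟪v, x k⟫) + (1+s) * ⟪v, x k⟫) from by ring, abs_neg]
    obtain ⟨θ, hθ, hph⟩ := hWPR P Q hm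
    have hPi : P i ≠ 0 := by rw [hPk i]; exact left_ne_zero_of_mul hi0
    have hQi : Q i ≠ 0 := by rw [hQk i]; exact right_ne_zero_of_mul hi0
    have hPj : P j ≠ 0 := by rw [hPk j]; exact left_ne_zero_of_mul hj0
    have hQj : Q j ≠ 0 := by rw [hQk j]; exact right_ne_zero_of_mul hj0
    have hss : sgn (P i * Q i) = sgn (P j * Q j) := by
      rw [sgn_mul _ _ hPi hQi, sgn_mul _ _ hPj hQj, hph i hPi hQi, hph j hPj hQj,
        mul_assoc, mul_assoc, sgn_mul_self, sgn_mul_self]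
    have hiff := sgn_pos_iff hss
    rw [hPk i, hQk i, hPk j, hQk j] at hiff
    exact hiff
  have key := keyEq ((u i + v i)^2) ((u i - v i)^2) ((u j + v j)^2) ((u j - v j)^2)
    (sq_nonneg _) (sq_nonneg _) (sq_nonneg _) (sq_nonneg _) ?_
  · have h0 : ((u i + v i) * (u j - v j) - (u j + v j) * (u i - v i)) *
        ((u i + v i) * (u j - v j) + (u j + v j) * (u i - v i)) = 0 := by
      linear_combination key
    rcases mul_eq_zero.mp h0 with hc | hc
    · left; linear_combination (-(1:ℝ)/2) * hc
    · right; linear_combination ((1:ℝ)/2) * hc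
  · intro t ht h1 h2
    set s := Real.sqrt t with hs
    have hs2 : s^2 = t := Real.sq_sqrt ht
    have ei : ((1+s) * u i + (1-s) * v i) * ((1-s) * u i + (1+s) * v i)
        = (u i + v i)^2 - t * (u i - v i)^2 := by rw [← hs2]; ring
    have ej : ((1+s) * u j + (1-s) * v j) * ((1-s) * u j + (1+s) * v j)
        = (u j + v j)^2 - t * (u j - v j)^2 := by rw [← hs2]; ring
    have := hsign s (by rw [ei]; exact h1) (by rw [ej]; exact h2)
    rw [ei, ej] at this
    exact this

/-- Classification of weak phase retrieval: a family of nonzero vectors does weak phase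
retrieval iff whenever two vectors give the same measurements in absolute value, there is
an `a ≠ 0` such that every coordinate falls into one of the five cases (a)-(e). -/
theorem weakPhaseRetrieval_classification {n m : ℕ}
    (x : Fin m → EuclideanSpace ℝ (Fin n)) (hx : ∀ i, x i ≠ 0) :
    DoesWeakPhaseRetrieval x ↔
      ∀ u v : EuclideanSpace ℝ (Fin n),
        (∀ i, |(⟪u, x i⟫)| = |(⟪v, x i⟫)|) →
        ∃ a : ℝ, a ≠ 0 ∧ ∀ i : Fin n,
          (u i ≠ 0 ∧ v i = 0) ∨ (u i = 0 ∧ v i ≠ 0) ∨ (u i = 0 ∧ v i = 0) ∨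
          u i = a * v i ∨ u i = (1 / a) * v i := by
  constructor
  · intro hWPR u v hmeas
    by_cases hex : ∃ j, u j ≠ 0 ∧ v j ≠ 0
    · obtain ⟨j0, hu0, hv0⟩ := hex
      refine ⟨u j0 / v j0, div_ne_zero hu0 hv0, fun i => ?_⟩
      by_cases hu : u i = 0
      · by_cases hv : v i = 0
        · exact Or.inr (Or.inr (Or.inl ⟨hu, hv⟩))
        · exact Or.inr (Or.inl ⟨hu, hv⟩)
      · by_cases hv : v i = 0
        · exact Or.inl ⟨hu, hv⟩
        · rcases pair_ratio x hWPR u v hmeas i j0 hu hv hu0 hv0 with hc | hc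
          · refine Or.inr (Or.inr (Or.inr (Or.inl ?_)))
            rw [div_mul_eq_mul_div, eq_div_iff hv0]
            linear_combination hc
          · refine Or.inr (Or.inr (Or.inr (Or.inr ?_)))
            rw [one_div_div, div_mul_eq_mul_div, eq_div_iff hu0]
            linear_combination hc
    · refine ⟨1, one_ne_zero, fun i => ?_⟩
      by_cases hu : u i = 0
      · by_cases hv : v i = 0
        · exact Or.inr (Or.inr (Or.inl ⟨hu, hv⟩))
        · exact Or.inr (Or.inl ⟨hu, hv⟩)
      · by_cases hv : v i = 0
        · exact Or.inl ⟨hu, hv⟩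
        · exact absurd ⟨i, hu, hv⟩ hex
  · intro hcl u v hmeas
    obtain ⟨a, ha, hc⟩ := hcl u v hmeas
    refine ⟨sgn a, sgn_vals a, fun i hu hv => ?_⟩
    rcases hc i with h | h | h | h | h
    · exact absurd h.2 hv
    · exact absurd h.1 hu
    · exact absurd h.1 hu
    · rw [h, sgn_mul a (v i) ha hv]
    · rw [h, sgn_mul _ _ (one_div_ne_zero ha) hv, sgn_one_div]
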